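/- Let V be a finite-dimensional real inner product space, φ an alternating p-form of comass one on V, X ⊆ V open, K ⊆ X a nonempty compact set, and x ∈ X. Then x ∉ K̂ if and only if there exists f ∈ PSH(X,φ) with f ≥ 0 on X, f identically zero on some neighborhood of K, and f(x) > 0. (Lemma 4.2, Euclidean case) -/

import Mathlib

/-!
If `f ∈ PSH(X,φ)` and `f x > c > sup_K f`, compose `f - c` with a smooth, nondecreasing, convex
function `χ` that vanishes on `(-∞, 0]` and is positive on `(0, ∞)`. Along a `φ`-plane,
`Σ D²(χ ∘ f)(e_j, e_j) = χ'' Σ (Df e_j)² + χ' Σ D²f(e_j, e_j) ≥ 0`, so `χ ∘ (f - c)` is the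
required function; `χ` is a smooth step function integrated twice. Conversely, a
function as in the statement has `sup_K f = 0 < f x`.
-/

open scoped RealInnerProductSpace

noncomputable section

variable {V : Type*} [NormedAddCommGroup V] [InnerProductSpace ℝ V] [FiniteDimensional ℝ V]

/-- `f` is `φ`-plurisubharmonic on `U`: `Σ_j D²f(x)(e_j,e_j) ≥ 0` for every `x ∈ U` and
every `φ`-plane `(e₁,…,e_p)` (an orthonormal `p`-tuple with `φ(e₁,…,e_p) = 1`). -/
def IsPSH {p : ℕ} (φ : V [⋀^Fin p]→ₗ[ℝ] ℝ) (U : Set V) (f : V → ℝ) : Prop :=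
  ∀ x ∈ U, ∀ e : Fin p → V, Orthonormal ℝ e → φ e = 1 →
    0 ≤ ∑ j, iteratedFDeriv ℝ 2 f x ![e j, e j]

/-- The `(X,φ)`-convex hull of `K`:
`K̂ = {x ∈ X : f(x) ≤ sup_K f for all f ∈ PSH(X,φ)}`, where `PSH(X,φ)` is the set of
smooth `φ`-plurisubharmonic functions on `X`. -/
def pshHull {p : ℕ} (φ : V [⋀^Fin p]→ₗ[ℝ] ℝ) (X K : Set V) : Set V :=
  {x ∈ X | ∀ f : V → ℝ, ContDiffOn ℝ (⊤ : ℕ∞) f X → IsPSH φ X f → f x ≤ sSup (f '' K)}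

open Set
open scoped ContDiff

theorem iteratedFDeriv_two_comp_apply_self {E : Type*} [NormedAddCommGroup E] [NormedSpace ℝ E]
    {ψ : ℝ → ℝ} {f : E → ℝ} {x : E}
    (hψ : ContDiff ℝ 2 ψ) (hf : ContDiffAt ℝ 2 f x) (v : E) :
    iteratedFDeriv ℝ 2 (ψ ∘ f) x ![v, v] =
      deriv (deriv ψ) (f x) * fderiv ℝ f x v ^ 2 +
        deriv ψ (f x) * iteratedFDeriv ℝ 2 f x ![v, v] := by
  obtain ⟨hψ₁, -, hψ'⟩ := (contDiff_succ_iff_deriv (n := 1)).mp hψ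
  have hψ'₁ : Differentiable ℝ (deriv ψ) := hψ'.differentiable one_ne_zero
  have hfderiv : fderiv ℝ (ψ ∘ f) =ᶠ[nhds x] fun y => deriv ψ (f y) • fderiv ℝ f y := by
    filter_upwards [hf.eventually (by simp)] with y hy
    exact ((hψ₁ (f y)).hasDerivAt.comp_hasFDerivAt y
      (hy.differentiableAt two_ne_zero).hasFDerivAt).fderiv
  have hsecond : HasFDerivAt (fun y => deriv ψ (f y) • fderiv ℝ f y)
      (deriv ψ (f x) • fderiv ℝ (fderiv ℝ f) x +
        (deriv (deriv ψ) (f x) • fderiv ℝ f x).smulRight (fderiv ℝ f x)) x :=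
    ((hψ'₁ (f x)).hasDerivAt.comp_hasFDerivAt x
      (hf.differentiableAt two_ne_zero).hasFDerivAt).smul
      ((hf.fderiv_right (m := 1) le_rfl).differentiableAt one_ne_zero).hasFDerivAt
  rw [iteratedFDeriv_two_apply, iteratedFDeriv_two_apply, hfderiv.fderiv_eq, hsecond.fderiv]
  simp only [Matrix.cons_val_zero, Matrix.cons_val_one, add_apply,
    smul_apply, ContinuousLinearMap.smulRight_apply, smul_eq_mul]
  ring

theorem IsPSH.monotone_convex_comp {E : Type*} [NormedAddCommGroup E] [InnerProductSpace ℝ E]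
    {p : ℕ} {φ : E [⋀^Fin p]→ₗ[ℝ] ℝ} {X : Set E} {f : E → ℝ}
    {ψ : ℝ → ℝ} (hf : IsPSH φ X f) (hX : IsOpen X) (hf₂ : ContDiffOn ℝ 2 f X)
    (hψ : ContDiff ℝ 2 ψ) (hψ_mono : Monotone ψ) (hψ_conv : ConvexOn ℝ univ ψ) :
    IsPSH φ X (ψ ∘ f) := by
  intro y hy e he heφ
  have hψ₁ : Differentiable ℝ ψ := hψ.differentiable two_ne_zero
  have hψ' : 0 ≤ deriv ψ (f y) := hψ_mono.deriv_nonneg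
  have hψ'' : 0 ≤ deriv (deriv ψ) (f y) :=
    (monotoneOn_univ.mp (hψ_conv.monotoneOn_deriv fun t _ => hψ₁ t)).deriv_nonneg
  have hf_at : ContDiffAt ℝ 2 f y := hf₂.contDiffAt (hX.mem_nhds hy)
  simp only [iteratedFDeriv_two_comp_apply_self hψ hf_at, Finset.sum_add_distrib,
    ← Finset.mul_sum]
  exact add_nonneg (mul_nonneg hψ'' (Finset.sum_nonneg fun j _ => sq_nonneg _))
    (mul_nonneg hψ' (hf y hy e he heφ))

section Primitive

def primitive (g : ℝ → ℝ) (t : ℝ) : ℝ := ∫ u in (0 : ℝ)..t, g u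

variable {g : ℝ → ℝ}

theorem hasDerivAt_primitive (hg : Continuous g) (t : ℝ) : HasDerivAt (primitive g) (g t) t :=
  (hg.integral_hasStrictDerivAt 0 t).hasDerivAt

theorem deriv_primitive (hg : Continuous g) : deriv (primitive g) = g :=
  funext fun t => (hasDerivAt_primitive hg t).deriv

theorem contDiff_primitive (hg : ContDiff ℝ ∞ g) : ContDiff ℝ ∞ (primitive g) := by
  rw [contDiff_infty_iff_deriv, deriv_primitive hg.continuous]
  exact ⟨fun t => (hasDerivAt_primitive hg.continuous t).differentiableAt, hg⟩

theorem primitive_eq_zero_of_nonpos (hg : ∀ u ≤ 0, g u = 0) {t : ℝ} (ht : t ≤ 0) :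
    primitive g t = 0 := by
  rw [primitive, intervalIntegral.integral_symm, neg_eq_zero]
  refine (intervalIntegral.integral_congr fun u hu => ?_).trans intervalIntegral.integral_zero
  rw [uIcc_of_le ht] at hu
  exact hg u hu.2

theorem primitive_nonneg (hg₀ : ∀ u ≤ 0, g u = 0) (hg : ∀ u, 0 ≤ g u) (t : ℝ) :
    0 ≤ primitive g t := by
  rcases le_or_gt t 0 with ht | ht
  · exact (primitive_eq_zero_of_nonpos hg₀ ht).ge
  · exact intervalIntegral.integral_nonneg ht.le fun u _ => hg u

theorem primitive_pos (hg : Continuous g) (hpos : ∀ u, 0 < u → 0 < g u) {t : ℝ} (ht : 0 < t) :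
    0 < primitive g t :=
  intervalIntegral.intervalIntegral_pos_of_pos_on (hg.intervalIntegrable 0 t)
    (fun u hu => hpos u hu.1) ht

theorem monotone_primitive (hg : Continuous g) (hg₀ : ∀ u, 0 ≤ g u) :
    Monotone (primitive g) :=
  monotone_of_deriv_nonneg (fun t => (hasDerivAt_primitive hg t).differentiableAt)
    fun t => by rw [deriv_primitive hg]; exact hg₀ t

theorem convexOn_primitive (hg : Continuous g) (hmono : Monotone g) :
    ConvexOn ℝ univ (primitive g) :=
  Monotone.convexOn_univ_of_deriv (fun t => (hasDerivAt_primitive hg t).differentiableAt)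
    (by rwa [deriv_primitive hg])

end Primitive

def smoothRamp : ℝ → ℝ := primitive (primitive Real.smoothTransition)

theorem contDiff_smoothRamp : ContDiff ℝ ∞ smoothRamp :=
  contDiff_primitive (contDiff_primitive Real.smoothTransition.contDiff)

theorem smoothRamp_eq_zero_of_nonpos {t : ℝ} (ht : t ≤ 0) : smoothRamp t = 0 :=
  primitive_eq_zero_of_nonpos
    (fun _ => primitive_eq_zero_of_nonpos fun _ => Real.smoothTransition.zero_of_nonpos) ht

theorem smoothRamp_nonneg (t : ℝ) : 0 ≤ smoothRamp t :=
  primitive_nonneg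
    (fun _ => primitive_eq_zero_of_nonpos fun _ => Real.smoothTransition.zero_of_nonpos)
    (primitive_nonneg (fun _ => Real.smoothTransition.zero_of_nonpos)
      Real.smoothTransition.nonneg) t

theorem smoothRamp_pos {t : ℝ} (ht : 0 < t) : 0 < smoothRamp t :=
  primitive_pos (contDiff_primitive Real.smoothTransition.contDiff).continuous
    (fun _ => primitive_pos Real.smoothTransition.continuous
      fun _ => Real.smoothTransition.pos_of_pos) ht

theorem monotone_smoothRamp : Monotone smoothRamp :=
  monotone_primitive (contDiff_primitive Real.smoothTransition.contDiff).continuous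
    (primitive_nonneg (fun _ => Real.smoothTransition.zero_of_nonpos) Real.smoothTransition.nonneg)

theorem convexOn_smoothRamp : ConvexOn ℝ univ smoothRamp :=
  convexOn_primitive (contDiff_primitive Real.smoothTransition.contDiff).continuous
    (monotone_primitive Real.smoothTransition.continuous Real.smoothTransition.nonneg)

theorem not_mem_pshHull_iff {p : ℕ}
    (φ : V [⋀^Fin p]→ₗ[ℝ] ℝ)
    (X : Set V) (hX : IsOpen X) (K : Set V) (hK : IsCompact K)
    (hKX : K ⊆ X) (x : V) (hx : x ∈ X) :
    x ∉ pshHull φ X K ↔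
      ∃ f : V → ℝ, ContDiffOn ℝ (⊤ : ℕ∞) f X ∧ IsPSH φ X f ∧ (∀ y ∈ X, 0 ≤ f y) ∧
        (∃ N : Set V, IsOpen N ∧ K ⊆ N ∧ ∀ y ∈ N ∩ X, f y = 0) ∧ 0 < f x := by
  constructor
  · intro hxK
    obtain ⟨f, hf, hf_psh, hfx⟩ : ∃ f : V → ℝ, ContDiffOn ℝ (⊤ : ℕ∞) f X ∧ IsPSH φ X f ∧
        sSup (f '' K) < f x := by
      simpa [pshHull, hx] using hxK
    obtain ⟨c, hc_sup, hcx⟩ := exists_between hfx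
    have hKc : ∀ y ∈ K, f y < c := fun y hy =>
      (le_csSup (hK.image_of_continuousOn (hf.continuousOn.mono hKX)).bddAbove
        (mem_image_of_mem f hy)).trans_lt hc_sup
    set ψ : ℝ → ℝ := fun t => smoothRamp (t - c)
    have hψ : ContDiff ℝ ∞ ψ := contDiff_smoothRamp.comp (contDiff_id.sub contDiff_const)
    have hψ_conv : ConvexOn ℝ univ ψ := by
      simpa [ψ, Function.comp_def, neg_add_eq_sub] using convexOn_smoothRamp.translate_right (-c)
    refine ⟨ψ ∘ f, hψ.comp_contDiffOn hf, ?_, fun y _ => smoothRamp_nonneg _,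
      ⟨X ∩ f ⁻¹' Iio c, hf.continuousOn.isOpen_inter_preimage hX isOpen_Iio,
        fun y hy => ⟨hKX hy, hKc y hy⟩,
        fun y hy => smoothRamp_eq_zero_of_nonpos (sub_nonpos.mpr hy.1.2.le)⟩,
      smoothRamp_pos (sub_pos.mpr hcx)⟩
    exact hf_psh.monotone_convex_comp hX (hf.of_le ENat.LEInfty.out) (hψ.of_le ENat.LEInfty.out)
      (fun _ _ h => monotone_smoothRamp (sub_le_sub_right h c)) hψ_conv
  · rintro ⟨f, hf, hf_psh, -, ⟨N, -, hKN, hfN⟩, hfx⟩ ⟨-, hle⟩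
    have hK0 : sSup (f '' K) ≤ 0 := Real.sSup_nonpos <| by
      rintro _ ⟨y, hy, rfl⟩
      exact (hfN y ⟨hKN hy, hKX hy⟩).le
    linarith [hle f hf hf_psh]
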